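/- With Ŵ as defined, for every f ∈ [n] with f ≠ 0 one has Ŵ_f ≤ (n/(B'·|f|))^F. -/

import Mathlib

open Finset

/-- Circular (modulo-`n`) distance of an index to `0`. -/
def cdist (n : ℕ) (x : ZMod n) : ℕ := min x.val (n - x.val)

/-- `Ŵ_f = ((1/(B'-1)) ∑_{f' ∈ ℤ, |f'| < B'/2} e^{2πi f f'/n})^F`, the `F`-fold power of
the normalized Dirichlet kernel of width `B' - 1` (the inner sum is real). -/
noncomputable def What (n B' F : ℕ) (f : ZMod n) : ℝ :=
  (((B' : ℝ) - 1)⁻¹ *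
    (∑ f' ∈ Finset.Ioo (-((B' : ℤ) / 2)) ((B' : ℤ) / 2),
      Complex.exp (2 * Real.pi * Complex.I * (f.val : ℂ) * (f' : ℂ) / (n : ℂ))).re) ^ F

/-! The inner sum is a Dirichlet kernel: with `w = e^{2πi f/n}` it is a geometric sum in `w`,
of modulus at most `2/|w - 1| = 1/|sin(π f/n)|`. Jordan's inequality `sin x ≥ 2x/π` on `[0, π/2]`,
applied at the circular distance `|f|` of `f` to `0`, bounds this by `n/(2|f|)`. Dividing by
`B' - 1 ≥ B'/2` bounds the normalized kernel in absolute value by `n/(B'|f|)`, and since `F` is even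
its `F`-th power is the `F`-th power of that absolute value. -/

open Real

section GeomSum

variable {𝕜 : Type*} [NormedDivisionRing 𝕜] {w : 𝕜}

lemma norm_geom_sum_le (hw : ‖w‖ = 1) (hw1 : w ≠ 1) (m : ℕ) :
    ‖∑ j ∈ range m, w ^ j‖ ≤ 2 / ‖w - 1‖ := by
  rw [geom_sum_eq hw1, norm_div]
  gcongr
  calc ‖w ^ m - 1‖ ≤ ‖w ^ m‖ + ‖(1 : 𝕜)‖ := norm_sub_le _ _
    _ = 2 := by rw [norm_pow, hw, one_pow, norm_one]; norm_num

lemma norm_sum_zpow_Ioo_le (hw : ‖w‖ = 1) (hw1 : w ≠ 1) (a b : ℤ) :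
    ‖∑ k ∈ Ioo a b, w ^ k‖ ≤ 2 / ‖w - 1‖ := by
  have hw0 : w ≠ 0 := norm_ne_zero_iff.mp (hw ▸ one_ne_zero)
  have hshift : ∑ k ∈ Ioo a b, w ^ k = w ^ (a + 1) * ∑ j ∈ range (b - a - 1).toNat, w ^ j := by
    simp [Int.Ioo_eq_finset_map, mul_sum, zpow_add₀ hw0]
  rw [hshift, norm_mul, norm_zpow, hw, one_zpow, one_mul]
  exact norm_geom_sum_le hw hw1 _

end GeomSum

lemma two_mul_div_le_sin_pi_mul_div {x y : ℝ} (hx : 0 ≤ x) (hxy : 2 * x ≤ y) :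
    2 * x / y ≤ sin (π * x / y) := by
  rcases (hx.trans (by linarith : x ≤ 2 * x)).trans hxy |>.eq_or_lt with rfl | hy
  · simp
  calc 2 * x / y = 2 / π * (π * x / y) := by field_simp
    _ ≤ sin (π * x / y) := mul_le_sin (by positivity) (by
        rw [div_le_iff₀ hy]; nlinarith [pi_pos])

section CircularDistance

variable {n : ℕ} [NeZero n] {f : ZMod n}

lemma cdist_pos (hf : f ≠ 0) : 0 < cdist n f := by
  have := ZMod.val_lt f
  have := (ZMod.val_ne_zero f).mpr hf
  unfold cdist; omega

lemma two_mul_cdist_div_le_sin (f : ZMod n) :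
    2 * (cdist n f : ℝ) / n ≤ sin (π * f.val / n) := by
  have hv := (ZMod.val_lt f).le
  have hsymm : sin (π * f.val / n) = sin (π * ((n - f.val : ℕ) : ℝ) / n) := by
    rw [Nat.cast_sub hv, ← sin_pi_sub]
    congr 1
    field_simp [NeZero.ne n]
  rcases le_total f.val (n - f.val) with h | h
  · rw [cdist, min_eq_left h]
    exact two_mul_div_le_sin_pi_mul_div (Nat.cast_nonneg _)
      (by exact_mod_cast (by omega : 2 * f.val ≤ n))
  · rw [cdist, min_eq_right h, hsymm]
    exact two_mul_div_le_sin_pi_mul_div (Nat.cast_nonneg _)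
      (by exact_mod_cast (by omega : 2 * (n - f.val) ≤ n))

lemma norm_sum_exp_Ioo_le (hf : f ≠ 0) (a b : ℤ) :
    ‖∑ k ∈ Ioo a b, Complex.exp (2 * π * Complex.I * (f.val : ℂ) * (k : ℂ) / (n : ℂ))‖ ≤
      n / (2 * cdist n f) := by
  set w := Complex.exp (Complex.I * ((2 * π * f.val / n : ℝ) : ℂ))
  have hterm (k : ℤ) :
      Complex.exp (2 * π * Complex.I * (f.val : ℂ) * (k : ℂ) / (n : ℂ)) = w ^ k := by
    rw [← Complex.exp_int_mul]; push_cast; ring_nf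
  have hn : (0 : ℝ) < n := by exact_mod_cast Nat.pos_of_neZero n
  have hd : (0 : ℝ) < cdist n f := by exact_mod_cast cdist_pos hf
  have hsin := two_mul_cdist_div_le_sin f
  have hgap : 2 * (2 * (cdist n f : ℝ) / n) ≤ ‖w - 1‖ := by
    rw [Complex.norm_exp_I_mul_ofReal_sub_one, show 2 * π * f.val / n / 2 = π * f.val / n by ring,
      norm_mul, norm_two, Real.norm_eq_abs, abs_of_nonneg (hsin.trans' (by positivity))]
    linarith
  have hw1 : w ≠ 1 := fun h => by
    rw [h, sub_self, norm_zero] at hgap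
    exact (by positivity : (0 : ℝ) < 2 * (2 * cdist n f / n)).not_ge hgap
  calc _ = ‖∑ k ∈ Ioo a b, w ^ k‖ := by simp only [hterm]
    _ ≤ 2 / ‖w - 1‖ := norm_sum_zpow_Ioo_le (Complex.norm_exp_I_mul_ofReal _) hw1 a b
    _ ≤ 2 / (2 * (2 * cdist n f / n)) := by gcongr
    _ = n / (2 * cdist n f) := by field_simp

end CircularDistance

theorem What_le_decay_general (n B' F : ℕ) [NeZero n]
    (hB2 : 2 ≤ B') (hFe : Even F)
    (f : ZMod n) (hf : f ≠ 0) :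
    What n B' F f ≤ ((n : ℝ) / ((B' : ℝ) * (cdist n f : ℝ))) ^ F := by
  set S := ∑ f' ∈ Finset.Ioo (-((B' : ℤ) / 2)) ((B' : ℤ) / 2),
      Complex.exp (2 * Real.pi * Complex.I * (f.val : ℂ) * (f' : ℂ) / (n : ℂ))
  have hS : |S.re| ≤ n / (2 * cdist n f) :=
    (Complex.abs_re_le_norm S).trans (norm_sum_exp_Ioo_le hf _ _)
  have hB : (2 : ℝ) ≤ B' := by exact_mod_cast hB2
  have hd : (0 : ℝ) < cdist n f := by exact_mod_cast cdist_pos hf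
  have hkernel : |((B' : ℝ) - 1)⁻¹ * S.re| ≤ n / (B' * cdist n f) :=
    calc |((B' : ℝ) - 1)⁻¹ * S.re| = |S.re| / (B' - 1) := by
          rw [abs_mul, abs_inv, abs_of_pos (by linarith), inv_mul_eq_div]
      _ ≤ n / (2 * cdist n f) / (B' - 1) := by gcongr; linarith
      _ = n / (2 * (B' - 1) * cdist n f) := by rw [div_div]; ring_nf
      _ ≤ n / (B' * cdist n f) := by gcongr; linarith
  calc What n B' F f = |((B' : ℝ) - 1)⁻¹ * S.re| ^ F := (hFe.pow_abs _).symm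
    _ ≤ _ := pow_le_pow_left₀ (abs_nonneg _) hkernel F

/-- For every `f ∈ [n]` with `f ≠ 0`, `Ŵ_f ≤ (n/(B'|f|))^F`. -/
theorem What_le_decay (n B' F : ℕ) [NeZero n]
    (hn : ∃ k, n = 2 ^ k) (hB' : ∃ k, B' = 2 ^ k)
    (hB2 : 2 ≤ B') (hBn : 2 * B' ≤ n) (hF2 : 2 ≤ F) (hFe : Even F)
    (f : ZMod n) (hf : f ≠ 0) :
    What n B' F f ≤ ((n : ℝ) / ((B' : ℝ) * (cdist n f : ℝ))) ^ F :=
  What_le_decay_general n B' F hB2 hFe f hf
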